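/- In ℤ[[q]], the theta series φ(-q) = Σ_{n∈ℤ} (-1)^n q^{n^2} satisfies the 3-dissection φ(-q) = f_9^2/f_18 - 2q·(f_3·f_18^2)/(f_6·f_9). -/

import Mathlib

open PowerSeries
open Finset Filter

noncomputable instance : TopologicalSpace (PowerSeries ℤ) :=
  inferInstanceAs (TopologicalSpace ((Unit →₀ ℕ) → ℤ))

/-- `f a = ∏_{k=1}^∞ (1 - q^{a k})`. -/
noncomputable def f (a : ℕ) : ℤ⟦X⟧ := ∏' k : ℕ, (1 - (X : ℤ⟦X⟧) ^ (a * (k + 1)))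

/-- `φ(-q) = ∑_{n ∈ ℤ} (-1)^n q^{n^2}`. -/
noncomputable def phiNeg : ℤ⟦X⟧ :=
  ∑' n : ℤ, C (((-1 : ℤˣ) ^ n : ℤˣ) : ℤ) * (X : ℤ⟦X⟧) ^ (n ^ 2).toNat

instance : T2Space (PowerSeries ℤ) := inferInstanceAs (T2Space ((Unit →₀ ℕ) → ℤ))

lemma tendsto_iff_coeff {ι : Type*} {F : Filter ι} {g : ι → ℤ⟦X⟧} {P : ℤ⟦X⟧} :
    Filter.Tendsto g F (nhds P) ↔ ∀ n : ℕ, ∀ᶠ i in F, coeff n (g i) = coeff n P := by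
  rw [show Filter.Tendsto g F (nhds P) ↔
      Filter.Tendsto (fun i => (g i : (Unit →₀ ℕ) → ℤ)) F (nhds (P : (Unit →₀ ℕ) → ℤ)) from Iff.rfl]
  refine (tendsto_pi_nhds (f := fun i => (g i : (Unit →₀ ℕ) → ℤ)) (g := (P : (Unit →₀ ℕ) → ℤ))).trans ?_
  constructor
  · intro h n
    have := h (Finsupp.single () n)
    rw [nhds_discrete, tendsto_pure] at this
    exact this
  · intro h d
    rw [nhds_discrete, tendsto_pure]
    have := h (d ())
    have hd : d = Finsupp.single () (d ()) := Finsupp.unique_single d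
    rw [hd]
    exact this

/-- coefficient `m` unchanged when multiplying by something ≡ 1 mod X^(m+1) -/
lemma coeff_mul_one_congr {m M : ℕ} (hm : m < M) {A B : ℤ⟦X⟧}
    (hB : (X : ℤ⟦X⟧) ^ M ∣ B - 1) : coeff m (A * B) = coeff m A := by
  have : (X : ℤ⟦X⟧) ^ M ∣ A * B - A := by
    have := Dvd.dvd.mul_left hB A
    rwa [mul_sub, mul_one] at this
  have h0 : coeff m (A * B - A) = 0 := (X_pow_dvd_iff.mp this) m hm
  rw [map_sub] at h0; omega

lemma dvd_prod_one_congr {M : ℕ} {s : Finset ℕ} {g : ℕ → ℤ⟦X⟧}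
    (h : ∀ k ∈ s, (X : ℤ⟦X⟧) ^ M ∣ g k - 1) :
    (X : ℤ⟦X⟧) ^ M ∣ (∏ k ∈ s, g k) - 1 := by
  induction s using Finset.cons_induction with
  | empty => simp
  | cons a s ha ih =>
    rw [Finset.prod_cons]
    have h1 : (X : ℤ⟦X⟧) ^ M ∣ g a - 1 := h a (Finset.mem_cons_self a s)
    have h2 := ih (fun k hk => h k (Finset.mem_cons_of_mem hk))
    have : g a * (∏ k ∈ s, g k) - 1
        = g a * ((∏ k ∈ s, g k) - 1) + (g a - 1) := by ring
    rw [this]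
    exact dvd_add (Dvd.dvd.mul_left h2 _) h1

/-- Main tprod lemma. -/
theorem hasProd_ps {g : ℕ → ℤ⟦X⟧}
    (h : ∀ m k : ℕ, m ≤ k → (X : ℤ⟦X⟧) ^ (m + 1) ∣ g k - 1) :
    HasProd g (PowerSeries.mk fun m => coeff m (∏ k ∈ Finset.range (m + 1), g k)) := by
  rw [HasProd, tendsto_iff_coeff]
  intro m
  rw [SummationFilter.unconditional_filter, eventually_atTop]
  refine ⟨Finset.range (m + 1), fun s hs => ?_⟩
  rw [coeff_mk]
  have hsplit : (∏ k ∈ s, g k) = (∏ k ∈ Finset.range (m+1), g k) * ∏ k ∈ s \ Finset.range (m+1), g k := by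
    rw [← Finset.prod_union (Finset.disjoint_sdiff)]
    congr 1
    rw [Finset.union_sdiff_of_subset hs]
  rw [hsplit]
  exact coeff_mul_one_congr (Nat.lt_succ_self m)
    (dvd_prod_one_congr (fun k hk => by
      have : ¬ k < m + 1 := fun hc => (Finset.mem_sdiff.mp hk).2 (Finset.mem_range.mpr hc)
      exact h m k (by omega)))

theorem tprod_sub_dvd {g : ℕ → ℤ⟦X⟧}
    (h : ∀ m k : ℕ, m ≤ k → (X : ℤ⟦X⟧) ^ (m + 1) ∣ g k - 1) (N : ℕ) :
    (X : ℤ⟦X⟧) ^ N ∣ (∏' k, g k) - ∏ k ∈ Finset.range N, g k := by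
  rw [(hasProd_ps h).tprod_eq]
  rw [X_pow_dvd_iff]
  intro m hm
  rw [map_sub, coeff_mk]
  have : (∏ k ∈ Finset.range N, g k)
      = (∏ k ∈ Finset.range (m+1), g k) * ∏ k ∈ Finset.range N \ Finset.range (m+1), g k := by
    rw [← Finset.prod_union (Finset.disjoint_sdiff)]
    congr 1
    rw [Finset.union_sdiff_of_subset (Finset.range_subset_range.mpr (by omega))]
  rw [this, coeff_mul_one_congr (Nat.lt_succ_self m)
    (dvd_prod_one_congr (fun k hk => by
      have h1 : ¬ k < m + 1 := fun hc => (Finset.mem_sdiff.mp hk).2 (Finset.mem_range.mpr hc)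
      exact h m k (by omega)))]
  omega

/-- Main tsum lemma over ℤ. -/
theorem hasSum_ps {g : ℤ → ℤ⟦X⟧}
    (h : ∀ (m : ℕ) (n : ℤ), (m : ℤ) < |n| → (X : ℤ⟦X⟧) ^ (m + 1) ∣ g n) :
    HasSum g (PowerSeries.mk fun m => coeff m (∑ n ∈ Finset.Icc (-(m:ℤ)) m, g n)) := by
  rw [HasSum, tendsto_iff_coeff]
  intro m
  rw [SummationFilter.unconditional_filter, eventually_atTop]
  refine ⟨Finset.Icc (-(m:ℤ)) m, fun s hs => ?_⟩
  rw [coeff_mk]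
  have hsplit : (∑ n ∈ s, g n) = (∑ n ∈ Finset.Icc (-(m:ℤ)) m, g n)
      + ∑ n ∈ s \ Finset.Icc (-(m:ℤ)) m, g n := by
    rw [← Finset.sum_union (Finset.disjoint_sdiff)]
    congr 1
    rw [Finset.union_sdiff_of_subset hs]
  rw [hsplit, map_add]
  have : coeff m (∑ n ∈ s \ Finset.Icc (-(m:ℤ)) m, g n) = 0 := by
    rw [map_sum]
    refine Finset.sum_eq_zero (fun n hn => ?_)
    have h1 : ¬ ((-(m:ℤ)) ≤ n ∧ n ≤ m) := fun hc => (Finset.mem_sdiff.mp hn).2 (Finset.mem_Icc.mpr hc)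
    have h2 : (m : ℤ) < |n| := by rcases abs_cases n with ⟨h3,h4⟩|⟨h3,h4⟩ <;> omega
    exact (X_pow_dvd_iff.mp (h m n h2)) m (Nat.lt_succ_self m)
  omega

theorem tsum_sub_dvd {g : ℤ → ℤ⟦X⟧}
    (h : ∀ (m : ℕ) (n : ℤ), (m : ℤ) < |n| → (X : ℤ⟦X⟧) ^ (m + 1) ∣ g n) (K : ℕ) :
    (X : ℤ⟦X⟧) ^ K ∣ (∑' n, g n) - ∑ n ∈ Finset.Icc (-(K:ℤ)) K, g n := by
  rw [(hasSum_ps h).tsum_eq, X_pow_dvd_iff]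
  intro m hm
  rw [map_sub, coeff_mk]
  have hsub : Finset.Icc (-(m:ℤ)) m ⊆ Finset.Icc (-(K:ℤ)) K := by
    apply Finset.Icc_subset_Icc <;> omega
  have hsplit : (∑ n ∈ Finset.Icc (-(K:ℤ)) K, g n) = (∑ n ∈ Finset.Icc (-(m:ℤ)) m, g n)
      + ∑ n ∈ Finset.Icc (-(K:ℤ)) K \ Finset.Icc (-(m:ℤ)) m, g n := by
    rw [← Finset.sum_union (Finset.disjoint_sdiff)]
    congr 1
    rw [Finset.union_sdiff_of_subset hsub]
  rw [hsplit, map_add]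
  have : coeff m (∑ n ∈ Finset.Icc (-(K:ℤ)) K \ Finset.Icc (-(m:ℤ)) m, g n) = 0 := by
    rw [map_sum]
    refine Finset.sum_eq_zero (fun n hn => ?_)
    have h1 : ¬ ((-(m:ℤ)) ≤ n ∧ n ≤ m) := fun hc => (Finset.mem_sdiff.mp hn).2 (Finset.mem_Icc.mpr hc)
    have h2 : (m : ℤ) < |n| := by rcases abs_cases n with ⟨h3,h4⟩|⟨h3,h4⟩ <;> omega
    exact (X_pow_dvd_iff.mp (h m n h2)) m (Nat.lt_succ_self m)
  omega

lemma ps_eq_of_forall_dvd {A B : ℤ⟦X⟧} (h : ∀ M : ℕ, (X : ℤ⟦X⟧) ^ M ∣ A - B) : A = B := by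
  ext m
  have := (X_pow_dvd_iff.mp (h (m+1))) m (Nat.lt_succ_self m)
  rw [map_sub] at this; omega


open Finset

section JTP
variable {K : Type*} [Field K]

noncomputable def FPQ (ξ : K) (c : ℕ) (r : ℕ) : K := ∏ i ∈ Finset.range r, (1 - ξ ^ (2*c*(i+1)))

noncomputable def bq (ξ : K) (c : ℕ) (m k : ℕ) : K :=
  if k ≤ m then FPQ ξ c m / (FPQ ξ c k * FPQ ξ c (m-k)) else 0

def ee (c d : ℕ) (n : ℤ) : ℤ := c*n^2 + d*n

noncomputable def mm (ξ : K) (c d : ℕ) (N k : ℕ) : K := (-1)^(N+k) * ξ ^ (ee c d ((k:ℤ) - N))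

noncomputable def TT (ξ : K) (c d : ℕ) (N : ℕ) : K :=
  ∑ k ∈ Finset.range (2*N+1), mm ξ c d N k * bq ξ c (2*N) k

variable {ξ : K} {c d : ℕ}

lemma one_sub_ne (hone : ∀ j : ℕ, 0 < j → ξ ^ j ≠ 1) (hc : 0 < c) (r : ℕ) :
    (1 - ξ ^ (2*c*(r+1))) ≠ 0 := by
  intro h
  exact hone (2*c*(r+1)) (by positivity) (sub_eq_zero.mp h).symm

lemma FPQ_ne_zero (hone : ∀ j : ℕ, 0 < j → ξ ^ j ≠ 1) (hc : 0 < c) (r : ℕ) :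
    FPQ ξ c r ≠ 0 :=
  Finset.prod_ne_zero_iff.mpr (fun i _ => one_sub_ne hone hc i)

lemma FPQ_succ (r : ℕ) : FPQ ξ c (r+1) = FPQ ξ c r * (1 - ξ ^ (2*c*(r+1))) :=
  Finset.prod_range_succ _ r

lemma FPQ_zero : FPQ ξ c 0 = 1 := rfl

lemma bq_self (hone : ∀ j : ℕ, 0 < j → ξ ^ j ≠ 1) (hc : 0 < c) (m : ℕ) : bq ξ c m m = 1 := by
  rw [bq, if_pos le_rfl, Nat.sub_self, FPQ_zero, mul_one,
    div_self (FPQ_ne_zero hone hc m)]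

lemma bq_zero (hone : ∀ j : ℕ, 0 < j → ξ ^ j ≠ 1) (hc : 0 < c) (m : ℕ) : bq ξ c m 0 = 1 := by
  rw [bq, if_pos (Nat.zero_le m), Nat.sub_zero, FPQ_zero, one_mul,
    div_self (FPQ_ne_zero hone hc m)]

lemma bq_of_gt {m k : ℕ} (h : m < k) : bq ξ c m k = 0 := by
  rw [bq, if_neg (by omega)]

lemma P1 (hone : ∀ j : ℕ, 0 < j → ξ ^ j ≠ 1) (hc : 0 < c) (m k : ℕ) :
    bq ξ c (m+1) (k+1) = bq ξ c m k + ξ^(2*c*(k+1)) * bq ξ c m (k+1) := by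
  rcases lt_trichotomy k m with hkm | rfl | hkm
  · obtain ⟨j, rfl⟩ : ∃ j, m = k+1+j := ⟨m-k-1, by omega⟩
    rw [bq, if_pos (by omega), bq, if_pos (by omega), bq, if_pos (by omega),
      show k+1+j+1-(k+1) = j+1 by omega, show k+1+j-k = j+1 by omega,
      show k+1+j-(k+1) = j by omega,
      show k+1+j+1 = (k+1+j)+1 from rfl, FPQ_succ,
      show FPQ ξ c (k+1) = FPQ ξ c k * (1 - ξ^(2*c*(k+1))) from FPQ_succ k,
      show FPQ ξ c (j+1) = FPQ ξ c j * (1 - ξ^(2*c*(j+1))) from FPQ_succ j]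
    have hP := one_sub_ne hone hc k
    have hR := one_sub_ne hone hc j
    have hK := FPQ_ne_zero hone hc k
    have hJ := FPQ_ne_zero hone hc j
    have hM := FPQ_ne_zero hone hc (k+1+j)
    field_simp
    ring_nf
  · rw [bq_self hone hc, bq_self hone hc, bq_of_gt (by omega)]
    simp
  · rw [bq_of_gt (by omega), bq_of_gt (by omega), bq_of_gt (by omega)]
    simp

lemma P2 (hone : ∀ j : ℕ, 0 < j → ξ ^ j ≠ 1) (hc : 0 < c) (m k : ℕ) :
    bq ξ c (m+1) (k+1) = ξ^(2*c*(m-k)) * bq ξ c m k + bq ξ c m (k+1) := by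
  rcases lt_trichotomy k m with hkm | rfl | hkm
  · obtain ⟨j, rfl⟩ : ∃ j, m = k+1+j := ⟨m-k-1, by omega⟩
    rw [bq, if_pos (by omega), bq, if_pos (by omega), bq, if_pos (by omega),
      show k+1+j+1-(k+1) = j+1 by omega, show k+1+j-k = j+1 by omega,
      show k+1+j-(k+1) = j by omega,
      show k+1+j+1 = (k+1+j)+1 from rfl, FPQ_succ,
      show FPQ ξ c (k+1) = FPQ ξ c k * (1 - ξ^(2*c*(k+1))) from FPQ_succ k,
      show FPQ ξ c (j+1) = FPQ ξ c j * (1 - ξ^(2*c*(j+1))) from FPQ_succ j]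
    have hP := one_sub_ne hone hc k
    have hR := one_sub_ne hone hc j
    have hK := FPQ_ne_zero hone hc k
    have hJ := FPQ_ne_zero hone hc j
    have hM := FPQ_ne_zero hone hc (k+1+j)
    field_simp
    ring_nf
  · rw [bq_self hone hc, bq_self hone hc, bq_of_gt (by omega), Nat.sub_self]
    norm_num
  · rw [bq_of_gt (by omega), bq_of_gt (by omega), bq_of_gt (by omega)]
    simp

lemma P3 (hone : ∀ j : ℕ, 0 < j → ξ ^ j ≠ 1) (hc : 0 < c) (m k : ℕ) :
    bq ξ c (m+2) (k+2) = ξ^(2*c*(m-k)) * bq ξ c m k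
      + (1 + ξ^(2*c*(m+1))) * bq ξ c m (k+1) + ξ^(2*c*(k+2)) * bq ξ c m (k+2) := by
  have h1 : bq ξ c (m+2) (k+2) = bq ξ c (m+1) (k+1) + ξ^(2*c*(k+2)) * bq ξ c (m+1) (k+2) :=
    P1 hone hc (m+1) (k+1)
  rw [h1, P2 hone hc m k, show k+2 = (k+1)+1 from rfl, P2 hone hc m (k+1)]
  rcases le_or_gt (k+1) m with hkm | hkm
  · obtain ⟨j, rfl⟩ : ∃ j, m = k+1+j := ⟨m-(k+1), by omega⟩
    rw [show k+1+j-(k+1) = j by omega, show k+1+j-k = j+1 by omega]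
    have h2 : ξ^(2*c*(k+1+1)) * ξ^(2*c*j) = ξ^(2*c*(k+1+j+1)) := by
      rw [← pow_add]; congr 1; ring
    linear_combination (bq ξ c (k+1+j) (k+1)) * h2
  · rcases le_or_gt k m with hk | hk
    · have hkm' : k = m := by omega
      subst hkm'
      rw [bq_of_gt (show k < k+1 by omega), bq_of_gt (show k < k+2 by omega)]
      ring
    · rw [bq_of_gt (show m < k by omega), bq_of_gt (show m < k+1 by omega),
        bq_of_gt (show m < k+2 by omega)]
      ring


lemma TT_def (N : ℕ) : TT ξ c d N = ∑ k ∈ Finset.range (2*N+1), mm ξ c d N k * bq ξ c (2*N) k := rfl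

lemma mmA (hξ : ξ ≠ 0) {N k : ℕ} (hk : k ≤ 2*N) :
    mm ξ c d (N+1) (k+2) * ξ^(2*c*(2*N-k))
      = -(ξ^(c+d) * (ξ^(2*c*N) * mm ξ c d N k)) := by
  rw [mm, mm]
  have hs : (-1:K)^((N+1)+(k+2)) = -(-1:K)^(N+k) := by
    rw [show (N+1)+(k+2) = (N+k)+3 by ring, pow_add]; norm_num
  have hprod : ξ ^ (ee c d ((↑(k+2):ℤ) - ↑(N+1))) * ξ^(2*c*(2*N-k))
      = ξ^(c+d) * (ξ^(2*c*N) * ξ ^ (ee c d ((k:ℤ) - ↑N))) := by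
    rw [← zpow_natCast ξ (2*c*(2*N-k)), ← zpow_natCast ξ (c+d), ← zpow_natCast ξ (2*c*N),
      ← zpow_add₀ hξ, ← zpow_add₀ hξ, ← zpow_add₀ hξ]
    congr 1
    have h1 : ((2*c*(2*N-k) : ℕ) : ℤ) = 2*(c:ℤ)*(2*(N:ℤ)-(k:ℤ)) := by
      rw [Nat.cast_mul, Nat.cast_sub hk]; push_cast; ring
    rw [h1]
    simp only [ee]
    push_cast
    ring
  rw [hs]
  linear_combination (-(-1:K)^(N+k)) * hprod

lemma mmB {N k : ℕ} : mm ξ c d (N+1) (k+2) = mm ξ c d N (k+1) := by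
  rw [mm, mm]
  congr 1
  · rw [show (N+1)+(k+2) = (N+(k+1))+2 by ring, pow_add]; norm_num
  · congr 1; push_cast; ring

lemma mmC (hξ : ξ ≠ 0) (hdc : d ≤ c) {N k : ℕ} :
    mm ξ c d (N+1) (k+2) * ξ^(2*c*(k+2))
      = -(ξ^(c-d) * (ξ^(2*c*N) * mm ξ c d N (k+2))) := by
  rw [mm, mm]
  have hs : (-1:K)^((N+1)+(k+2)) = -(-1:K)^(N+(k+2)) := by
    rw [show (N+1)+(k+2) = (N+(k+2))+1 by ring, pow_add]; norm_num
  have hprod : ξ ^ (ee c d ((↑(k+2):ℤ) - ↑(N+1))) * ξ^(2*c*(k+2))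
      = ξ^(c-d) * (ξ^(2*c*N) * ξ ^ (ee c d ((↑(k+2):ℤ) - ↑N))) := by
    rw [← zpow_natCast ξ (2*c*(k+2)), ← zpow_natCast ξ (c-d), ← zpow_natCast ξ (2*c*N),
      ← zpow_add₀ hξ, ← zpow_add₀ hξ, ← zpow_add₀ hξ]
    congr 1
    rw [Nat.cast_sub hdc]
    simp only [ee]
    push_cast
    ring
  rw [hs]
  linear_combination (-(-1:K)^(N+(k+2))) * hprod

lemma mmD (hξ : ξ ≠ 0) (hdc : d ≤ c) {N : ℕ} :
    mm ξ c d (N+1) 0 = -(ξ^(c-d) * (ξ^(2*c*N) * mm ξ c d N 0)) := by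
  rw [mm, mm]
  have hs : (-1:K)^((N+1)+0) = -(-1:K)^(N+0) := by
    rw [show (N+1)+0 = (N+0)+1 by ring, pow_add]; norm_num
  have hprod : ξ ^ (ee c d ((0:ℤ) - ↑(N+1)))
      = ξ^(c-d) * (ξ^(2*c*N) * ξ ^ (ee c d ((0:ℤ) - ↑N))) := by
    rw [← zpow_natCast ξ (c-d), ← zpow_natCast ξ (2*c*N), ← zpow_add₀ hξ, ← zpow_add₀ hξ]
    congr 1
    rw [Nat.cast_sub hdc]
    simp only [ee]
    push_cast
    ring
  rw [hs]
  linear_combination (-(-1:K)^(N+0)) * hprod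

lemma mmE {N : ℕ} : mm ξ c d (N+1) 1 = mm ξ c d N 0 := by
  rw [mm, mm]
  congr 1
  · rw [show (N+1)+1 = (N+0)+2 by ring, pow_add]; norm_num
  · congr 1; push_cast; ring

lemma mmF (hξ : ξ ≠ 0) (hdc : d ≤ c) {N : ℕ} :
    ξ^(c-d) * (ξ^(2*c*N) * mm ξ c d N 1) = -(ξ^(2*c) * mm ξ c d N 0) := by
  rw [mm, mm]
  have hs : (-1:K)^(N+1) = -(-1:K)^(N+0) := by
    rw [show N+1 = (N+0)+1 by ring, pow_add]; norm_num
  have hprod : ξ^(c-d) * (ξ^(2*c*N) * ξ ^ (ee c d ((1:ℤ) - ↑N)))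
      = ξ^(2*c) * ξ ^ (ee c d ((0:ℤ) - ↑N)) := by
    rw [← zpow_natCast ξ (c-d), ← zpow_natCast ξ (2*c*N), ← zpow_natCast ξ (2*c),
      ← zpow_add₀ hξ, ← zpow_add₀ hξ, ← zpow_add₀ hξ]
    congr 1
    rw [Nat.cast_sub hdc]
    simp only [ee]
    push_cast
    ring
  rw [hs]
  linear_combination (-(-1:K)^(N+0)) * hprod

lemma bq_top (hone : ∀ j : ℕ, 0 < j → ξ ^ j ≠ 1) (hc : 0 < c) (N : ℕ) :
    bq ξ c (2*N) (2*N+1) = 0 := bq_of_gt (by omega)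

lemma STEP (hξ : ξ ≠ 0) (hone : ∀ j : ℕ, 0 < j → ξ ^ j ≠ 1) (hc : 0 < c) (hdc : d ≤ c) (N : ℕ) :
    TT ξ c d (N+1) = (1 - ξ^(c+d) * ξ^(2*c*N)) * ((1 - ξ^(c-d) * ξ^(2*c*N)) * TT ξ c d N) := by
  have key : ∀ k ∈ Finset.range (2*N+1),
      mm ξ c d (N+1) (k+2) * bq ξ c (2*N+2) (k+2)
      = -(ξ^(c+d) * (ξ^(2*c*N) * (mm ξ c d N k * bq ξ c (2*N) k)))
        + (1 + ξ^(2*c*(2*N+1))) * (mm ξ c d N (k+1) * bq ξ c (2*N) (k+1))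
        + -(ξ^(c-d) * (ξ^(2*c*N) * (mm ξ c d N (k+2) * bq ξ c (2*N) (k+2)))) := by
    intro k hk
    have hk' : k ≤ 2*N := by have := Finset.mem_range.mp hk; omega
    rw [show (2*N+2) = (2*N)+2 from rfl, P3 hone hc (2*N) k]
    have h1 := mmA (c := c) (d := d) (N := N) (k := k) hξ hk'
    have h2 := mmB (ξ := ξ) (c := c) (d := d) (N := N) (k := k)
    have h3 := mmC (c := c) (d := d) (N := N) (k := k) hξ hdc
    linear_combination (bq ξ c (2*N) k) * h1
      + ((1 + ξ^(2*c*(2*N+1))) * bq ξ c (2*N) (k+1)) * h2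
      + (bq ξ c (2*N) (k+2)) * h3
  have hS1 : ∑ k ∈ Finset.range (2*N+1), mm ξ c d N (k+1) * bq ξ c (2*N) (k+1)
      = TT ξ c d N - mm ξ c d N 0 := by
    have e1 := Finset.sum_range_succ' (fun k => mm ξ c d N k * bq ξ c (2*N) k) (2*N+1)
    have e2 := Finset.sum_range_succ (fun k => mm ξ c d N k * bq ξ c (2*N) k) (2*N+1)
    rw [bq_top hone hc, mul_zero, add_zero] at e2
    rw [bq_zero hone hc, mul_one] at e1
    rw [e2] at e1
    rw [TT_def]
    linear_combination -e1
  have hS2 : ∑ k ∈ Finset.range (2*N+1), mm ξ c d N (k+2) * bq ξ c (2*N) (k+2)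
      = TT ξ c d N - mm ξ c d N 0 - mm ξ c d N 1 * bq ξ c (2*N) 1 := by
    have e1 := Finset.sum_range_succ' (fun k => mm ξ c d N (k+1) * bq ξ c (2*N) (k+1)) (2*N+1)
    have e2 := Finset.sum_range_succ (fun k => mm ξ c d N (k+1) * bq ξ c (2*N) (k+1)) (2*N+1)
    rw [show 2*N+1+1 = 2*N+2 from rfl] at e2
    rw [bq_of_gt (show 2*N < 2*N+2 by omega), mul_zero, add_zero] at e2
    rw [e2, hS1] at e1
    linear_combination -e1
  have hb1 : bq ξ c (2*N+2) 1 = 1 + ξ^(2*c*(2*N+1)) + ξ^(2*c*1) * bq ξ c (2*N) 1 := by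
    have p1 : bq ξ c ((2*N+1)+1) (0+1) = bq ξ c (2*N+1) 0 + ξ^(2*c*(0+1)) * bq ξ c (2*N+1) (0+1) :=
      P1 hone hc (2*N+1) 0
    have p2 : bq ξ c ((2*N)+1) (0+1) = ξ^(2*c*((2*N)-0)) * bq ξ c (2*N) 0 + bq ξ c (2*N) (0+1) :=
      P2 hone hc (2*N) 0
    rw [bq_zero hone hc] at p1 p2
    rw [mul_one] at p2
    rw [show (2*N+1)+1 = 2*N+2 from rfl] at p1
    rw [show (0+1 : ℕ) = 1 from rfl] at p1 p2
    rw [p2] at p1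
    rw [p1]
    have hmerge : ξ^(2*c*(0+1)) * ξ^(2*c*(2*N-0)) = ξ^(2*c*(2*N+1)) := by
      rw [← pow_add]; congr 1; rw [Nat.sub_zero]; ring
    linear_combination hmerge
  -- expand TT (N+1)
  have expand : TT ξ c d (N+1)
      = (∑ k ∈ Finset.range (2*N+1), mm ξ c d (N+1) (k+2) * bq ξ c (2*N+2) (k+2))
        + mm ξ c d (N+1) 1 * bq ξ c (2*N+2) 1 + mm ξ c d (N+1) 0 * bq ξ c (2*N+2) 0 := by
    rw [TT, show 2*(N+1)+1 = (2*N+2)+1 by ring]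
    rw [Finset.sum_range_succ' (fun k => mm ξ c d (N+1) k * bq ξ c (2*(N+1)) k) (2*N+2)]
    rw [Finset.sum_range_succ' (fun k => mm ξ c d (N+1) (k+1) * bq ξ c (2*(N+1)) (k+1)) (2*N+1)]
    rw [show 2*(N+1) = 2*N+2 by ring]
  rw [expand, Finset.sum_congr rfl key]
  rw [Finset.sum_add_distrib, Finset.sum_add_distrib, Finset.sum_neg_distrib, Finset.sum_neg_distrib,
    ← Finset.mul_sum, ← Finset.mul_sum, ← Finset.mul_sum, ← Finset.mul_sum, ← Finset.mul_sum]
  rw [hS1, hS2, ← TT_def]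
  rw [bq_zero hone hc, mul_one, hb1, mmD hξ hdc, mmE]
  have hmmF := mmF (c := c) (d := d) (N := N) hξ hdc
  have r1 : ξ^(c+d) * ξ^(c-d) = ξ^(2*c) := by
    rw [← pow_add]; congr 1; omega
  have r2 : ξ^(2*c) * (ξ^(2*c*N) * ξ^(2*c*N)) = ξ^(2*c*(2*N+1)) := by
    rw [← pow_add, ← pow_add]; congr 1; ring
  have r3 : ξ^(2*c*1) = ξ^(2*c) := by congr 1; ring
  linear_combination hmmF + (bq ξ c (2*N) 1 - 1) * hmmF + (TT ξ c d N) * r2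
    - (TT ξ c d N) * (ξ^(2*c*N) * ξ^(2*c*N)) * r1 + mm ξ c d N 0 * r3




lemma TT_zero : TT ξ c d 0 = 1 := by
  rw [TT_def]
  simp [mm, bq, ee, FPQ]

lemma JTPK (hξ : ξ ≠ 0) (hone : ∀ j : ℕ, 0 < j → ξ ^ j ≠ 1) (hc : 0 < c) (hdc : d ≤ c) (N : ℕ) :
    ∏ j ∈ Finset.range N, ((1 - ξ^(c*(2*j+1)+d)) * (1 - ξ^(c*(2*j+1)-d))) = TT ξ c d N := by
  induction N with
  | zero => simp [TT_zero]
  | succ n ih =>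
    rw [Finset.prod_range_succ, ih, STEP hξ hone hc hdc]
    have m1 : ξ^(c+d) * ξ^(2*c*n) = ξ^(c*(2*n+1)+d) := by rw [← pow_add]; congr 1; ring
    have m2 : ξ^(c-d) * ξ^(2*c*n) = ξ^(c*(2*n+1)-d) := by
      rw [← pow_add]; congr 1
      have : c*(2*n+1) = 2*c*n + c := by ring
      omega
    rw [m1, m2]; ring

lemma FPQ_split {r s : ℕ} (h : r ≤ s) :
    FPQ ξ c s = FPQ ξ c r * ∏ i ∈ Finset.Ico r s, (1 - ξ^(2*c*(i+1))) := by
  rw [FPQ, FPQ, Finset.range_eq_Ico, Finset.range_eq_Ico]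
  exact (Finset.prod_Ico_consecutive (fun i => 1 - ξ^(2*c*(i+1))) (Nat.zero_le r) h).symm

lemma FPQ_mul_bq (hone : ∀ j : ℕ, 0 < j → ξ ^ j ≠ 1) (hc : 0 < c) {N k L : ℕ}
    (hk : k ≤ 2*N) (hL : 2*N ≤ L) :
    FPQ ξ c L * bq ξ c (2*N) k
    = (∏ i ∈ Finset.Ico k L, (1 - ξ^(2*c*(i+1)))) * ∏ i ∈ Finset.Ico (2*N-k) (2*N), (1 - ξ^(2*c*(i+1))) := by
  rw [bq, if_pos hk, FPQ_split (le_trans hk hL),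
    show FPQ ξ c (2*N) = FPQ ξ c (2*N-k) * ∏ i ∈ Finset.Ico (2*N-k) (2*N), (1 - ξ^(2*c*(i+1)))
      from FPQ_split (by omega)]
  field_simp [FPQ_ne_zero hone hc]

theorem IDK2 (hξ : ξ ≠ 0) (hone : ∀ j : ℕ, 0 < j → ξ ^ j ≠ 1) (hc : 0 < c) (hdc : d ≤ c)
    (N L : ℕ) (hL : 2*N ≤ L) :
    FPQ ξ c L * ∏ j ∈ Finset.range N, ((1 - ξ^(c*(2*j+1)+d)) * (1 - ξ^(c*(2*j+1)-d)))
    = ∑ k ∈ Finset.range (2*N+1), mm ξ c d N k *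
        ((∏ i ∈ Finset.Ico k L, (1 - ξ^(2*c*(i+1)))) * ∏ i ∈ Finset.Ico (2*N-k) (2*N), (1 - ξ^(2*c*(i+1)))) := by
  rw [JTPK hξ hone hc hdc, TT_def, Finset.mul_sum]
  refine Finset.sum_congr rfl (fun k hk => ?_)
  have hk' : k ≤ 2*N := by have := Finset.mem_range.mp hk; omega
  rw [← FPQ_mul_bq hone hc hk' hL]
  ring

end JTP

-- ===== Transfer to ℤ⟦X⟧ =====
section Transfer
open PowerSeries

noncomputable def PP (g : ℕ → ℕ) (R : ℕ) : ℤ⟦X⟧ := ∏ i ∈ Finset.range R, (1 - (X:ℤ⟦X⟧)^(g i))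

abbrev KK := FractionRing (PowerSeries ℤ)

noncomputable def φK : ℤ⟦X⟧ →+* KK := (algebraMap (PowerSeries ℤ) KK : _)

lemma φK_inj : Function.Injective φK := IsFractionRing.injective _ _

noncomputable def ξK : KK := φK (X : ℤ⟦X⟧)

lemma ξK_ne_zero : ξK ≠ 0 := by
  rw [ξK, Ne, map_eq_zero_iff φK φK_inj]
  exact X_ne_zero

lemma ξK_pow_ne_one : ∀ j : ℕ, 0 < j → ξK ^ j ≠ 1 := by
  intro j hj h
  rw [ξK, ← map_pow, show (1 : KK) = φK 1 from (map_one φK).symm] at h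
  have := φK_inj h
  have h2 := congrArg (PowerSeries.constantCoeff) this
  rw [map_pow, constantCoeff_X, map_one, zero_pow (by omega)] at h2
  exact absurd h2 (by norm_num)

lemma ee_nonneg {c d : ℕ} (hdc : d ≤ c) (n : ℤ) : 0 ≤ ee c d n := by
  rw [ee]
  rcases le_or_gt 0 n with h | h
  · positivity
  · have h1 : (d:ℤ) * n ≥ (c:ℤ) * n := by
      apply mul_le_mul_of_nonpos_right _ (by omega)
      exact_mod_cast hdc
    have h3 := mul_nonneg (show (0:ℤ) ≤ -n by omega) (show (0:ℤ) ≤ -(n+1) by omega)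
    have h4 : (0:ℤ) ≤ (c:ℤ) := by positivity
    have h2 : (c:ℤ)*n^2 + (c:ℤ)*n ≥ 0 := by nlinarith [mul_nonneg h4 h3]
    linarith

lemma φK_monomial {c d : ℕ} (hdc : d ≤ c) (N k : ℕ) :
    φK ((-1:ℤ⟦X⟧)^(N+k) * X^((ee c d ((k:ℤ)-N)).toNat)) = mm ξK c d N k := by
  rw [map_mul, map_pow, map_neg, map_one, map_pow, mm, ξK]
  congr 1
  rw [← zpow_natCast (φK X) ((ee c d ((k:ℤ)-N)).toNat)]
  congr 1
  exact Int.toNat_of_nonneg (ee_nonneg hdc _)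

/-- Pulled-back polynomial JTP identity in `ℤ⟦X⟧`. -/
theorem IDP (c d : ℕ) (hc : 0 < c) (hdc : d ≤ c) (N L : ℕ) (hL : 2*N ≤ L) :
    PP (fun i => 2*c*(i+1)) L * (PP (fun j => c*(2*j+1)+d) N * PP (fun j => c*(2*j+1)-d) N)
    = ∑ k ∈ Finset.range (2*N+1), ((-1:ℤ⟦X⟧)^(N+k) * X^((ee c d ((k:ℤ)-N)).toNat)) *
        ((∏ i ∈ Finset.Ico k L, (1 - (X:ℤ⟦X⟧)^(2*c*(i+1)))) *
          ∏ i ∈ Finset.Ico (2*N-k) (2*N), (1 - (X:ℤ⟦X⟧)^(2*c*(i+1)))) := by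
  apply φK_inj
  rw [map_mul, map_mul, map_sum]
  have hPP : ∀ (g : ℕ → ℕ) (R : ℕ), φK (PP g R) = ∏ i ∈ Finset.range R, (1 - ξK^(g i)) := by
    intro g R
    rw [PP, map_prod]
    exact Finset.prod_congr rfl (fun i _ => by rw [map_sub, map_one, map_pow, ξK])
  rw [hPP, hPP, hPP, ← Finset.prod_mul_distrib]
  have := IDK2 (ξ := ξK) (c := c) (d := d) ξK_ne_zero ξK_pow_ne_one hc hdc N L hL
  rw [show FPQ ξK c L = ∏ i ∈ Finset.range L, (1 - ξK^(2*c*(i+1))) from rfl] at this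
  rw [this]
  refine Finset.sum_congr rfl (fun k hk => ?_)
  rw [map_mul, φK_monomial hdc, map_mul, map_prod, map_prod]
  congr 1
  congr 1
  · exact Finset.prod_congr rfl (fun i _ => by rw [map_sub, map_one, map_pow, ξK])
  · exact Finset.prod_congr rfl (fun i _ => by rw [map_sub, map_one, map_pow, ξK])

lemma dvd_one_sub_mul_one_sub {M a b : ℕ} {A B : ℤ⟦X⟧} (ha : M ≤ a) (hb : M ≤ b)
    (hA : (X:ℤ⟦X⟧)^a ∣ A - 1) (hB : (X:ℤ⟦X⟧)^b ∣ B - 1) : (X:ℤ⟦X⟧)^M ∣ A * B - 1 := by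
  have h1 : (X:ℤ⟦X⟧)^M ∣ A - 1 := dvd_trans (pow_dvd_pow X ha) hA
  have h2 : (X:ℤ⟦X⟧)^M ∣ B - 1 := dvd_trans (pow_dvd_pow X hb) hB
  have : A * B - 1 = A * (B - 1) + (A - 1) := by ring
  rw [this]
  exact dvd_add (Dvd.dvd.mul_left h2 A) h1

lemma prod_Ico_one_sub_dvd {a b M : ℕ} {g : ℕ → ℕ} (hg : ∀ i, a ≤ i → i < b → M ≤ g i) :
    (X:ℤ⟦X⟧)^M ∣ (∏ i ∈ Finset.Ico a b, (1 - (X:ℤ⟦X⟧)^(g i))) - 1 := by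
  apply dvd_prod_one_congr
  intro k hk
  have := Finset.mem_Ico.mp hk
  have h1 : (1 - (X:ℤ⟦X⟧)^(g k)) - 1 = -(X^(g k)) := by ring
  rw [h1, dvd_neg]
  exact pow_dvd_pow X (hg k this.1 this.2)

lemma keybound {c d : ℕ} (hc : 0 < c) (hdc : d ≤ c) {N k : ℕ} (hk : k ≤ 2*N) :
    c*N ≤ (ee c d ((k:ℤ)-N)).toNat + 2*c*(min (k+1) (2*N-k+1)) := by
  have h2 : ((ee c d ((k:ℤ)-N)).toNat : ℤ) = ee c d ((k:ℤ)-N) :=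
    Int.toNat_of_nonneg (ee_nonneg hdc _)
  have hee : ee c d ((k:ℤ)-N) = c*((k:ℤ)-N)^2 + d*((k:ℤ)-N) := rfl
  have hcd : (d:ℤ) ≤ c := by exact_mod_cast hdc
  have hc' : (0:ℤ) ≤ c := by positivity
  rcases le_or_gt k N with h | h
  · rw [show min (k+1) (2*N-k+1) = k+1 by omega]
    have hkN : (k:ℤ) ≤ N := by exact_mod_cast h
    have key : (c:ℤ)*N ≤ ee c d ((k:ℤ)-N) + 2*c*(k+1) := by
      rw [hee]
      nlinarith [mul_nonneg hc' (sq_nonneg ((k:ℤ) - N + 1)),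
        mul_nonneg (show (0:ℤ) ≤ (c:ℤ)-d by omega) (show (0:ℤ) ≤ (N:ℤ)-k by omega),
        mul_nonneg hc' (show (0:ℤ) ≤ (N:ℤ)-k by omega)]
    have : ((c*N : ℕ) : ℤ) ≤ (((ee c d ((k:ℤ)-N)).toNat + 2*c*(k+1) : ℕ) : ℤ) := by
      push_cast
      rw [h2]
      exact_mod_cast key
    exact_mod_cast this
  · rw [show min (k+1) (2*N-k+1) = 2*N-k+1 by omega]
    have hkN : (N:ℤ) < k := by exact_mod_cast h
    have hk2 : (k:ℤ) ≤ 2*N := by exact_mod_cast hk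
    have key : (c:ℤ)*N ≤ ee c d ((k:ℤ)-N) + 2*c*(2*(N:ℤ)-k+1) := by
      rw [hee]
      nlinarith [mul_nonneg hc' (sq_nonneg ((k:ℤ) - N - 1)),
        mul_nonneg (show (0:ℤ) ≤ (c:ℤ)-d by omega) (show (0:ℤ) ≤ (k:ℤ)-N by omega),
        mul_nonneg hc' (show (0:ℤ) ≤ (k:ℤ)-N by omega), mul_nonneg (show (0:ℤ) ≤ (d:ℤ) by positivity) (show (0:ℤ) ≤ (k:ℤ)-N by omega)]
    have : ((c*N : ℕ) : ℤ) ≤ (((ee c d ((k:ℤ)-N)).toNat + 2*c*(2*N-k+1) : ℕ) : ℤ) := by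
      push_cast [show ((2*N-k : ℕ):ℤ) = 2*(N:ℤ)-k by omega]
      rw [h2]
      linarith [key]
    exact_mod_cast this

/-- The main congruence: finite JTP mod `X^(c*N)`. -/
theorem JTPcong (c d : ℕ) (hc : 0 < c) (hdc : d ≤ c) (N : ℕ) :
    (X:ℤ⟦X⟧)^(c*N) ∣ PP (fun i => 2*c*(i+1)) (2*N) *
        (PP (fun j => c*(2*j+1)+d) N * PP (fun j => c*(2*j+1)-d) N)
      - ∑ k ∈ Finset.range (2*N+1), ((-1:ℤ⟦X⟧)^(N+k) * X^((ee c d ((k:ℤ)-N)).toNat)) := by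
  rw [IDP c d hc hdc N (2*N) le_rfl, ← Finset.sum_sub_distrib]
  apply Finset.dvd_sum
  intro k hk
  have hk' : k ≤ 2*N := by have := Finset.mem_range.mp hk; omega
  have h1 : ((-1:ℤ⟦X⟧)^(N+k) * X^((ee c d ((k:ℤ)-N)).toNat)) *
        ((∏ i ∈ Finset.Ico k (2*N), (1 - (X:ℤ⟦X⟧)^(2*c*(i+1)))) *
          ∏ i ∈ Finset.Ico (2*N-k) (2*N), (1 - (X:ℤ⟦X⟧)^(2*c*(i+1))))
      - ((-1:ℤ⟦X⟧)^(N+k) * X^((ee c d ((k:ℤ)-N)).toNat))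
      = ((-1:ℤ⟦X⟧)^(N+k) * X^((ee c d ((k:ℤ)-N)).toNat)) *
        (((∏ i ∈ Finset.Ico k (2*N), (1 - (X:ℤ⟦X⟧)^(2*c*(i+1)))) *
          ∏ i ∈ Finset.Ico (2*N-k) (2*N), (1 - (X:ℤ⟦X⟧)^(2*c*(i+1)))) - 1) := by ring
  rw [h1]
  have h3 : (X:ℤ⟦X⟧)^(2*c*(min (k+1) (2*N-k+1))) ∣
      ((∏ i ∈ Finset.Ico k (2*N), (1 - (X:ℤ⟦X⟧)^(2*c*(i+1)))) *
        ∏ i ∈ Finset.Ico (2*N-k) (2*N), (1 - (X:ℤ⟦X⟧)^(2*c*(i+1)))) - 1 := by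
    apply dvd_one_sub_mul_one_sub (a := 2*c*(k+1)) (b := 2*c*(2*N-k+1))
    · have : min (k+1) (2*N-k+1) ≤ k+1 := min_le_left _ _
      exact Nat.mul_le_mul_left _ this
    · have : min (k+1) (2*N-k+1) ≤ 2*N-k+1 := min_le_right _ _
      exact Nat.mul_le_mul_left _ this
    · exact prod_Ico_one_sub_dvd (fun i h1 h2 => Nat.mul_le_mul_left _ (by omega))
    · exact prod_Ico_one_sub_dvd (fun i h1 h2 => Nat.mul_le_mul_left _ (by omega))
  have h4 : (X:ℤ⟦X⟧)^((ee c d ((k:ℤ)-N)).toNat + 2*c*(min (k+1) (2*N-k+1))) ∣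
      ((-1:ℤ⟦X⟧)^(N+k) * X^((ee c d ((k:ℤ)-N)).toNat)) *
        (((∏ i ∈ Finset.Ico k (2*N), (1 - (X:ℤ⟦X⟧)^(2*c*(i+1)))) *
          ∏ i ∈ Finset.Ico (2*N-k) (2*N), (1 - (X:ℤ⟦X⟧)^(2*c*(i+1)))) - 1) := by
    rw [pow_add]
    exact mul_dvd_mul (Dvd.dvd.mul_left dvd_rfl _) h3
  exact dvd_trans (pow_dvd_pow X (keybound hc hdc hk')) h4

end Transfer
-- ===== product splits and stability =====
section Splits
open PowerSeries

lemma PP_succ (g : ℕ → ℕ) (R : ℕ) : PP g (R+1) = PP g R * (1 - (X:ℤ⟦X⟧)^(g R)) :=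
  Finset.prod_range_succ _ _

lemma R1 (a : ℕ) : ∀ N, PP (fun i => a*(i+1)) (2*N)
    = PP (fun i => 2*a*(i+1)) N * PP (fun j => a*(2*j+1)) N := by
  intro N
  induction N with
  | zero => simp [PP]
  | succ n ih =>
    rw [show 2*(n+1) = (2*n+1)+1 by ring, PP_succ, show 2*n+1 = (2*n)+1 from rfl, PP_succ,
      PP_succ, PP_succ, ih]
    have e1 : a*((2*n)+1) = a*(2*n+1) := rfl
    have e2 : a*((2*n+1)+1) = 2*a*(n+1) := by ring
    rw [e2]
    ring
  
lemma R2 : ∀ N, PP (fun j => 3*(2*j+1)) (3*N)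
    = PP (fun j => 9*(2*j+1)) N * (PP (fun j => 18*j+3) N * PP (fun j => 18*j+15) N) := by
  intro N
  induction N with
  | zero => simp [PP]
  | succ n ih =>
    rw [show 3*(n+1) = ((3*n+1)+1)+1 by ring, PP_succ, PP_succ, show 3*n+1 = (3*n)+1 from rfl,
      PP_succ, PP_succ, PP_succ, PP_succ, ih]
    have e1 : 3*(2*(3*n)+1) = 18*n+3 := by ring
    have e2 : 3*(2*((3*n)+1)+1) = 9*(2*n+1) := by ring
    have e3 : 3*(2*((3*n+1)+1)+1) = 18*n+15 := by ring
    rw [e1, e2, e3]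
    ring

lemma PP_stab {g : ℕ → ℕ} {M R R' : ℕ} (hR : R ≤ R') (hg : ∀ i, R ≤ i → M ≤ g i) :
    (X:ℤ⟦X⟧)^M ∣ PP g R' - PP g R := by
  rw [PP, PP, Finset.range_eq_Ico, ← Finset.prod_Ico_consecutive _ (Nat.zero_le R) hR,
    ← Finset.range_eq_Ico]
  have h1 : (X:ℤ⟦X⟧)^M ∣ (∏ i ∈ Finset.Ico R R', (1 - (X:ℤ⟦X⟧)^(g i))) - 1 :=
    prod_Ico_one_sub_dvd (fun i hi _ => hg i hi)
  have h2 : PP g R * (∏ i ∈ Finset.Ico R R', (1 - (X:ℤ⟦X⟧)^(g i))) - PP g R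
      = PP g R * ((∏ i ∈ Finset.Ico R R', (1 - (X:ℤ⟦X⟧)^(g i))) - 1) := by ring
  rw [show (∏ i ∈ Finset.range R, (1 - (X:ℤ⟦X⟧)^(g i))) = PP g R from rfl, h2]
  exact Dvd.dvd.mul_left h1 _

/-- congruence multiplication -/
lemma mc_mul {M : ℕ} {A B C D : ℤ⟦X⟧} (h1 : (X:ℤ⟦X⟧)^M ∣ A - B) (h2 : (X:ℤ⟦X⟧)^M ∣ C - D) :
    (X:ℤ⟦X⟧)^M ∣ A*C - B*D := by
  have : A*C - B*D = A*(C-D) + D*(A-B) := by ring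
  rw [this]
  exact dvd_add (Dvd.dvd.mul_left h2 _) (Dvd.dvd.mul_left h1 _)

lemma mc_trans {M : ℕ} {A B C : ℤ⟦X⟧} (h1 : (X:ℤ⟦X⟧)^M ∣ A - B) (h2 : (X:ℤ⟦X⟧)^M ∣ B - C) :
    (X:ℤ⟦X⟧)^M ∣ A - C := by
  have : A - C = (A - B) + (B - C) := by ring
  rw [this]; exact dvd_add h1 h2

lemma mc_symm {M : ℕ} {A B : ℤ⟦X⟧} (h1 : (X:ℤ⟦X⟧)^M ∣ A - B) : (X:ℤ⟦X⟧)^M ∣ B - A := by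
  have : B - A = -(A - B) := by ring
  rw [this]; exact Dvd.dvd.neg_right h1

end Splits
-- ===== theta side =====
section Theta
open PowerSeries

noncomputable def PSterm (n : ℤ) : ℤ⟦X⟧ :=
  C (((-1 : ℤˣ) ^ n : ℤˣ) : ℤ) * (X : ℤ⟦X⟧) ^ (n ^ 2).toNat
noncomputable def SAterm (n : ℤ) : ℤ⟦X⟧ :=
  C (((-1 : ℤˣ) ^ n : ℤˣ) : ℤ) * (X : ℤ⟦X⟧) ^ (ee 9 0 n).toNat
noncomputable def SBterm (n : ℤ) : ℤ⟦X⟧ :=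
  C (((-1 : ℤˣ) ^ n : ℤˣ) : ℤ) * (X : ℤ⟦X⟧) ^ (ee 9 6 n).toNat

lemma sgn_shift (a b : ℤ) : (-1:ℤˣ)^(a + 2*b) = (-1:ℤˣ)^a := by
  have h2 : ((-1:ℤˣ)^(2:ℤ)) = 1 := by
    rw [show (2:ℤ) = 1+1 from rfl, zpow_add, zpow_one]
    simp
  rw [zpow_add, zpow_mul, h2, one_zpow, mul_one]

lemma sgn_neg (a : ℤ) : (-1:ℤˣ)^(-a) = (-1:ℤˣ)^a := by
  have h2 : (-1:ℤˣ)^a * (-1:ℤˣ)^a = 1 := by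
    rw [← zpow_add, show a + a = 0 + 2*a by ring, sgn_shift, zpow_zero]
  rw [zpow_neg]
  exact inv_eq_of_mul_eq_one_right h2

lemma sgn_succ (a : ℤ) : (-1:ℤˣ)^(a+1) = -(-1:ℤˣ)^a := by
  rw [zpow_add_one]
  simp

lemma CX_eq {u v : ℤˣ} {e f : ℕ} (h1 : u = v) (h2 : e = f) :
    (C (u:ℤ)) * (X:ℤ⟦X⟧)^e = C (v:ℤ) * X^f := by rw [h1, h2]

lemma CX_eq_negX {u v : ℤˣ} {e f : ℕ} (h1 : u = -v) (h2 : e = f + 1) :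
    (C (u:ℤ)) * (X:ℤ⟦X⟧)^e = -(X * (C (v:ℤ) * X^f)) := by
  rw [h1, h2, Units.val_neg, map_neg, pow_succ]
  ring

lemma PSterm_neg (z : ℤ) : PSterm (-z) = PSterm z := by
  rw [PSterm, PSterm]
  exact CX_eq (sgn_neg z) (by congr 1; ring)

lemma Icc_peel (h : ℤ → ℤ⟦X⟧) (a : ℤ) (ha : 0 ≤ a) :
    ∑ n ∈ Finset.Icc (-(a+1)) (a+1), h n
      = h (a+1) + h (-(a+1)) + ∑ n ∈ Finset.Icc (-a) a, h n := by
  have h1 : Finset.Icc (-(a+1)) (a+1)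
      = insert (-(a+1)) (insert (a+1) (Finset.Icc (-a) a)) := by
    ext x
    simp only [Finset.mem_Icc, Finset.mem_insert]
    omega
  rw [h1, Finset.sum_insert (by simp only [Finset.mem_Icc, Finset.mem_insert]; omega),
    Finset.sum_insert (by simp only [Finset.mem_Icc]; omega)]
  ring

lemma SPLIT : ∀ N : ℕ, ∑ n ∈ Finset.Icc (-(3*(N:ℤ)+1)) (3*(N:ℤ)+1), PSterm n
    = (∑ n ∈ Finset.Icc (-(N:ℤ)) N, SAterm n)
      - 2*X*∑ n ∈ Finset.Icc (-(N:ℤ)) N, SBterm n := by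
  intro N
  induction N with
  | zero =>
    have e1 : Finset.Icc (-(3*((0:ℕ):ℤ)+1)) (3*((0:ℕ):ℤ)+1) = {-1, 0, 1} := by
      ext x
      simp only [Finset.mem_Icc, Finset.mem_insert, Finset.mem_singleton]
      omega
    have e2 : Finset.Icc (-((0:ℕ):ℤ)) ((0:ℕ):ℤ) = {0} := by
      ext x
      simp only [Finset.mem_Icc, Finset.mem_singleton]
      omega
    rw [e1, e2]
    rw [Finset.sum_insert (by decide), Finset.sum_insert (by decide), Finset.sum_singleton,
      Finset.sum_singleton, Finset.sum_singleton]
    have p1 : PSterm (-1) = -X := by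
      rw [show (-1:ℤ) = -(1:ℤ) from rfl, PSterm_neg, PSterm]
      norm_num
    have p0 : PSterm 0 = 1 := by
      rw [PSterm]
      norm_num
    have p2 : PSterm 1 = -X := by
      rw [PSterm]
      norm_num
    have q0 : SAterm 0 = 1 := by
      rw [SAterm]
      norm_num [ee]
    have r0 : SBterm 0 = 1 := by
      rw [SBterm]
      norm_num [ee]
    rw [p1, p0, p2, q0, r0]
    ring
  | succ n ih =>
    have hcast : (3*((n+1:ℕ):ℤ)+1) = (3*(n:ℤ)+3)+1 := by push_cast; ring
    rw [hcast, Icc_peel _ _ (by positivity),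
      show (3*(n:ℤ)+3) = (3*(n:ℤ)+2)+1 by ring, Icc_peel _ _ (by positivity),
      show (3*(n:ℤ)+2) = (3*(n:ℤ)+1)+1 by ring, Icc_peel _ _ (by positivity), ih]
    have hcast2 : (((n+1:ℕ)):ℤ) = (n:ℤ)+1 := by push_cast; ring
    rw [hcast2, Icc_peel _ _ (by positivity), Icc_peel _ _ (by positivity)]
    have tA1 : PSterm ((3*(n:ℤ)+1)+1+1) = SAterm ((n:ℤ)+1) := by
      rw [PSterm, SAterm]
      apply CX_eq
      · rw [show ((3*(n:ℤ)+1)+1+1) = ((n:ℤ)+1) + 2*((n:ℤ)+1) by ring]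
        exact sgn_shift _ _
      · have e : ((3*(n:ℤ)+1)+1+1)^2 = ee 9 0 ((n:ℤ)+1) := by simp [ee]; ring
        rw [e]
    have tA2 : PSterm (-((3*(n:ℤ)+1)+1+1)) = SAterm (-((n:ℤ)+1)) := by
      rw [PSterm_neg, PSterm, SAterm]
      apply CX_eq
      · rw [sgn_neg]
        rw [show ((3*(n:ℤ)+1)+1+1) = ((n:ℤ)+1) + 2*((n:ℤ)+1) by ring]
        exact sgn_shift _ _
      · have e : ((3*(n:ℤ)+1)+1+1)^2 = ee 9 0 (-((n:ℤ)+1)) := by simp [ee]; ring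
        rw [e]
    have tB1 : PSterm ((3*(n:ℤ)+1)+1+1+1) = -(X * SBterm ((n:ℤ)+1)) := by
      rw [PSterm, SBterm]
      apply CX_eq_negX
      · rw [show ((3*(n:ℤ)+1)+1+1+1) = ((n:ℤ)+1+1) + 2*((n:ℤ)+1) by ring, sgn_shift,
          show ((n:ℤ)+1+1) = ((n:ℤ)+1)+1 by ring, sgn_succ]
      · have e : ((3*(n:ℤ)+1)+1+1+1)^2 = ee 9 6 ((n:ℤ)+1) + 1 := by simp [ee]; ring
        have hnn := ee_nonneg (show 6 ≤ 9 by norm_num) ((n:ℤ)+1)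
        omega
    have tB1' : PSterm (-((3*(n:ℤ)+1)+1+1+1)) = -(X * SBterm ((n:ℤ)+1)) := by
      rw [PSterm_neg]
      exact tB1
    have tB2 : PSterm ((3*(n:ℤ)+1)+1) = -(X * SBterm (-((n:ℤ)+1))) := by
      rw [PSterm, SBterm]
      apply CX_eq_negX
      · rw [sgn_neg, show ((3*(n:ℤ)+1)+1) = (n:ℤ) + 2*((n:ℤ)+1) by ring, sgn_shift,
          sgn_succ, neg_neg]
      · have e : ((3*(n:ℤ)+1)+1)^2 = ee 9 6 (-((n:ℤ)+1)) + 1 := by simp [ee]; ring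
        have hnn := ee_nonneg (show 6 ≤ 9 by norm_num) (-((n:ℤ)+1))
        omega
    have tB2' : PSterm (-((3*(n:ℤ)+1)+1)) = -(X * SBterm (-((n:ℤ)+1))) := by
      rw [PSterm_neg]
      exact tB2
    rw [tA1, tA2, tB1, tB1', tB2, tB2']
    ring

end Theta
-- ===== reindexing and matches =====
section Match
open PowerSeries

lemma REIDX (h : ℤ → ℤ⟦X⟧) (N : ℕ) :
    ∑ n ∈ Finset.Icc (-(N:ℤ)) N, h n = ∑ k ∈ Finset.range (2*N+1), h ((k:ℤ) - N) := by
  refine Finset.sum_bij' (fun n _ => (n + N).toNat) (fun k _ => (k:ℤ) - N) ?_ ?_ ?_ ?_ ?_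
  · intro a ha
    have := Finset.mem_Icc.mp ha
    rw [Finset.mem_range]
    omega
  · intro b hb
    have := Finset.mem_range.mp hb
    rw [Finset.mem_Icc]
    omega
  · intro a ha
    have h1 := Finset.mem_Icc.mp ha
    show ((a + N).toNat : ℤ) - N = a
    omega
  · intro b hb
    have h1 := Finset.mem_range.mp hb
    show (((b:ℤ) - N + N).toNat) = b
    omega
  · intro a ha
    have h1 := Finset.mem_Icc.mp ha
    show h a = h (((a + N).toNat : ℤ) - N)
    have h2 : a = ((a + N).toNat : ℤ) - N := by omega
    exact congrArg h h2

lemma sgn_match (N k : ℕ) :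
    C (((-1:ℤˣ)^((k:ℤ)-N) : ℤˣ) : ℤ) = (-1:ℤ⟦X⟧)^(N+k) := by
  have h1 : (-1:ℤˣ)^((k:ℤ)-N) = (-1:ℤˣ)^(((N+k:ℕ)) : ℤ) := by
    rw [show ((k:ℤ)-N) = ((N:ℤ)+k) + 2*(-(N:ℤ)) by ring, sgn_shift,
      show ((N:ℤ)+k) = (((N+k:ℕ)) : ℤ) by push_cast; ring]
  rw [h1, zpow_natCast]
  have h2 : (((-1:ℤˣ)^(N+k) : ℤˣ) : ℤ) = (-1:ℤ)^(N+k) := by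
    rw [Units.val_pow_eq_pow_val]
    norm_num
  rw [h2, map_pow, map_neg, map_one]

lemma SA_match (N : ℕ) : ∑ n ∈ Finset.Icc (-(N:ℤ)) N, SAterm n
    = ∑ k ∈ Finset.range (2*N+1), ((-1:ℤ⟦X⟧)^(N+k) * X^((ee 9 0 ((k:ℤ)-N)).toNat)) := by
  rw [REIDX]
  exact Finset.sum_congr rfl (fun k _ => by rw [SAterm, sgn_match])

lemma SB_match (N : ℕ) : ∑ n ∈ Finset.Icc (-(N:ℤ)) N, SBterm n
    = ∑ k ∈ Finset.range (2*N+1), ((-1:ℤ⟦X⟧)^(N+k) * X^((ee 9 6 ((k:ℤ)-N)).toNat)) := by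
  rw [REIDX]
  exact Finset.sum_congr rfl (fun k _ => by rw [SBterm, sgn_match])

end Match
-- ===== final assembly =====
section Final
open PowerSeries

lemma f_approx {a : ℕ} (ha : 1 ≤ a) (R : ℕ) :
    (X:ℤ⟦X⟧)^R ∣ f a - PP (fun k => a*(k+1)) R := by
  have h : ∀ m k : ℕ, m ≤ k → (X : ℤ⟦X⟧) ^ (m + 1) ∣ (1 - (X:ℤ⟦X⟧)^(a*(k+1))) - 1 := by
    intro m k hmk
    have h2 : (1 - (X:ℤ⟦X⟧)^(a*(k+1))) - 1 = -(X^(a*(k+1))) := by ring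
    rw [h2, dvd_neg]
    apply pow_dvd_pow
    have h3 : 1*(k+1) ≤ a*(k+1) := Nat.mul_le_mul_right (k+1) ha
    omega
  exact tprod_sub_dvd h R

lemma phi_sum : phiNeg = ∑' n : ℤ, PSterm n := rfl

lemma phi_approx (K : ℕ) :
    (X:ℤ⟦X⟧)^K ∣ phiNeg - ∑ n ∈ Finset.Icc (-(K:ℤ)) K, PSterm n := by
  rw [phi_sum]
  apply tsum_sub_dvd
  intro m n hmn
  rw [PSterm]
  apply Dvd.dvd.mul_left
  apply pow_dvd_pow
  have h1 : (m:ℤ) + 1 ≤ |n| := by omega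
  have h2 : |n| ≤ |n| * |n| := le_mul_of_one_le_left (abs_nonneg n) (by omega)
  have h3 : n^2 = |n| * |n| := by rw [abs_mul_abs_self]; ring
  omega

-- weakening helper
lemma wk {M M' : ℕ} (h : M ≤ M') {A B : ℤ⟦X⟧} (hd : (X:ℤ⟦X⟧)^M' ∣ A - B) :
    (X:ℤ⟦X⟧)^M ∣ A - B := dvd_trans (pow_dvd_pow X h) hd

lemma mc_refl {M : ℕ} (A : ℤ⟦X⟧) : (X:ℤ⟦X⟧)^M ∣ A - A := by simp

lemma JTPa (M : ℕ) : (X:ℤ⟦X⟧)^M ∣ (∑ n ∈ Finset.Icc (-(M:ℤ)) M, SAterm n)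
    - PP (fun i => 18*(i+1)) (2*M) * (PP (fun j => 9*(2*j+1)) M * PP (fun j => 9*(2*j+1)) M) := by
  have j := JTPcong 9 0 (by norm_num) (by norm_num) M
  rw [show (fun i => 2*9*(i+1)) = (fun i => 18*(i+1)) from funext (fun i => by ring)] at j
  rw [show (fun j => 9*(2*j+1)+0) = (fun j => 9*(2*j+1)) from funext (fun j => by omega)] at j
  rw [show (fun j => 9*(2*j+1)-0) = (fun j => 9*(2*j+1)) from funext (fun j => by omega)] at j
  rw [← SA_match] at j
  exact wk (by omega) (mc_symm j)

lemma JTPb (M : ℕ) : (X:ℤ⟦X⟧)^M ∣ (∑ n ∈ Finset.Icc (-(M:ℤ)) M, SBterm n)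
    - PP (fun i => 18*(i+1)) (2*M) * (PP (fun j => 18*j+15) M * PP (fun j => 18*j+3) M) := by
  have j := JTPcong 9 6 (by norm_num) (by norm_num) M
  rw [show (fun i => 2*9*(i+1)) = (fun i => 18*(i+1)) from funext (fun i => by ring)] at j
  rw [show (fun j => 9*(2*j+1)+6) = (fun j => 18*j+15) from funext (fun j => by ring)] at j
  rw [show (fun j => 9*(2*j+1)-6) = (fun j => 18*j+3) from funext (fun j => by omega)] at j
  rw [← SB_match] at j
  exact wk (by omega) (mc_symm j)

lemma stab18 (M : ℕ) : (X:ℤ⟦X⟧)^M ∣ PP (fun i => 18*(i+1)) (2*M) - PP (fun i => 18*(i+1)) M :=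
  PP_stab (by omega) (fun i hi => by
    have : 1*(i+1) ≤ 18*(i+1) := Nat.mul_le_mul_right (i+1) (by norm_num)
    omega)

lemma stab6 (M : ℕ) : (X:ℤ⟦X⟧)^M ∣ PP (fun i => 6*(i+1)) (3*M) - PP (fun i => 6*(i+1)) M :=
  PP_stab (by omega) (fun i hi => by
    have : 1*(i+1) ≤ 6*(i+1) := Nat.mul_le_mul_right (i+1) (by norm_num)
    omega)

lemma happ9 (M : ℕ) : (X:ℤ⟦X⟧)^M ∣ f 9
    - PP (fun i => 18*(i+1)) M * PP (fun j => 9*(2*j+1)) M := by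
  have h := f_approx (show (1:ℕ) ≤ 9 by norm_num) (2*M)
  rw [R1 9 M] at h
  rw [show (fun i => 2*9*(i+1)) = (fun i => 18*(i+1)) from funext (fun i => by ring)] at h
  exact wk (by omega) h

lemma happ3 (M : ℕ) : (X:ℤ⟦X⟧)^M ∣ f 3
    - PP (fun i => 6*(i+1)) (3*M) *
        (PP (fun j => 9*(2*j+1)) M * (PP (fun j => 18*j+3) M * PP (fun j => 18*j+15) M)) := by
  have h := f_approx (show (1:ℕ) ≤ 3 by norm_num) (2*(3*M))
  rw [R1 3 (3*M)] at h
  rw [show (fun i => 2*3*(i+1)) = (fun i => 6*(i+1)) from funext (fun i => by ring)] at h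
  rw [R2 M] at h
  exact wk (by omega) h

lemma CA (M : ℕ) : (X:ℤ⟦X⟧)^M ∣
    (∑ n ∈ Finset.Icc (-(M:ℤ)) M, SAterm n) * f 18 - f 9 ^ 2 := by
  have h18 : (X:ℤ⟦X⟧)^M ∣ f 18 - PP (fun i => 18*(i+1)) (2*M) :=
    wk (by omega) (f_approx (by norm_num) (2*M))
  have c1 := mc_mul (JTPa M) h18
  have c2 : (X:ℤ⟦X⟧)^M ∣
      PP (fun i => 18*(i+1)) (2*M) * (PP (fun j => 9*(2*j+1)) M * PP (fun j => 9*(2*j+1)) M)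
        * PP (fun i => 18*(i+1)) (2*M)
      - PP (fun i => 18*(i+1)) M * (PP (fun j => 9*(2*j+1)) M * PP (fun j => 9*(2*j+1)) M)
        * PP (fun i => 18*(i+1)) M :=
    mc_mul (mc_mul (stab18 M) (mc_refl _)) (stab18 M)
  have c3 := mc_mul (mc_symm (happ9 M)) (mc_symm (happ9 M))
  have e : PP (fun i => 18*(i+1)) M * PP (fun j => 9*(2*j+1)) M *
      (PP (fun i => 18*(i+1)) M * PP (fun j => 9*(2*j+1)) M)
      = PP (fun i => 18*(i+1)) M * (PP (fun j => 9*(2*j+1)) M * PP (fun j => 9*(2*j+1)) M)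
        * PP (fun i => 18*(i+1)) M := by ring
  rw [e] at c3
  have e2 : f 9 * f 9 = f 9 ^ 2 := by ring
  rw [e2] at c3
  exact mc_trans (mc_trans c1 c2) c3

lemma CB (M : ℕ) : (X:ℤ⟦X⟧)^M ∣
    (∑ n ∈ Finset.Icc (-(M:ℤ)) M, SBterm n) * (f 6 * f 9) - f 3 * f 18 ^ 2 := by
  have h6 : (X:ℤ⟦X⟧)^M ∣ f 6 - PP (fun i => 6*(i+1)) M := f_approx (by norm_num) M
  have h18 : (X:ℤ⟦X⟧)^M ∣ f 18 - PP (fun i => 18*(i+1)) M := f_approx (by norm_num) M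
  have c1 := mc_mul (JTPb M) (mc_mul h6 (happ9 M))
  have c2 : (X:ℤ⟦X⟧)^M ∣
      PP (fun i => 18*(i+1)) (2*M) * (PP (fun j => 18*j+15) M * PP (fun j => 18*j+3) M)
        * (PP (fun i => 6*(i+1)) M * (PP (fun i => 18*(i+1)) M * PP (fun j => 9*(2*j+1)) M))
      - PP (fun i => 18*(i+1)) M * (PP (fun j => 18*j+15) M * PP (fun j => 18*j+3) M)
        * (PP (fun i => 6*(i+1)) M * (PP (fun i => 18*(i+1)) M * PP (fun j => 9*(2*j+1)) M)) :=
    mc_mul (mc_mul (stab18 M) (mc_refl _)) (mc_refl _)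
  have c3 := mc_mul (mc_mul (mc_symm (stab6 M)) (mc_refl
      (PP (fun j => 9*(2*j+1)) M * (PP (fun j => 18*j+3) M * PP (fun j => 18*j+15) M))))
    (mc_refl (PP (fun i => 18*(i+1)) M * PP (fun i => 18*(i+1)) M))
  have c4 := mc_mul (mc_symm (happ3 M)) (mc_mul (mc_symm h18) (mc_symm h18))
  -- align ring forms
  have e1 : PP (fun i => 18*(i+1)) M * (PP (fun j => 18*j+15) M * PP (fun j => 18*j+3) M)
        * (PP (fun i => 6*(i+1)) M * (PP (fun i => 18*(i+1)) M * PP (fun j => 9*(2*j+1)) M))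
      = PP (fun i => 6*(i+1)) M *
          (PP (fun j => 9*(2*j+1)) M * (PP (fun j => 18*j+3) M * PP (fun j => 18*j+15) M))
        * (PP (fun i => 18*(i+1)) M * PP (fun i => 18*(i+1)) M) := by ring
  rw [e1] at c2
  have e2 : PP (fun i => 6*(i+1)) (3*M) *
        (PP (fun j => 9*(2*j+1)) M * (PP (fun j => 18*j+3) M * PP (fun j => 18*j+15) M))
        * (PP (fun i => 18*(i+1)) M * PP (fun i => 18*(i+1)) M)
      = PP (fun i => 6*(i+1)) (3*M) *
        (PP (fun j => 9*(2*j+1)) M * (PP (fun j => 18*j+3) M * PP (fun j => 18*j+15) M))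
        * (PP (fun i => 18*(i+1)) M * PP (fun i => 18*(i+1)) M) := rfl
  have e3 : f 18 * f 18 = f 18 ^ 2 := by ring
  rw [e3] at c4
  exact mc_trans (mc_trans (mc_trans c1 c2) c3) c4

lemma Gmain : phiNeg * (f 6 * f 9 * f 18) = f 6 * f 9^3 - 2*X*(f 3 * f 18^3) := by
  apply ps_eq_of_forall_dvd
  intro M
  have hphi : (X:ℤ⟦X⟧)^M ∣ phiNeg - ((∑ n ∈ Finset.Icc (-(M:ℤ)) M, SAterm n)
      - 2*X*∑ n ∈ Finset.Icc (-(M:ℤ)) M, SBterm n) := by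
    have h1 := phi_approx (3*M+1)
    rw [show (((3*M+1 : ℕ)):ℤ) = 3*(M:ℤ)+1 by push_cast; ring, SPLIT M] at h1
    exact wk (by omega) h1
  have hmain : (X:ℤ⟦X⟧)^M ∣ ((∑ n ∈ Finset.Icc (-(M:ℤ)) M, SAterm n)
        - 2*X*∑ n ∈ Finset.Icc (-(M:ℤ)) M, SBterm n) * (f 6 * f 9 * f 18)
      - (f 6 * f 9^3 - 2*X*(f 3 * f 18^3)) := by
    have e : ((∑ n ∈ Finset.Icc (-(M:ℤ)) M, SAterm n)
        - 2*X*∑ n ∈ Finset.Icc (-(M:ℤ)) M, SBterm n) * (f 6 * f 9 * f 18)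
        - (f 6 * f 9^3 - 2*X*(f 3 * f 18^3))
        = ((∑ n ∈ Finset.Icc (-(M:ℤ)) M, SAterm n) * f 18 - f 9^2) * (f 6 * f 9)
          - (2*X*f 18) * ((∑ n ∈ Finset.Icc (-(M:ℤ)) M, SBterm n) * (f 6 * f 9)
              - f 3 * f 18^2) := by ring
    rw [e]
    exact dvd_sub (Dvd.dvd.mul_right (CA M) _) (Dvd.dvd.mul_left (CB M) _)
  have e2 : phiNeg * (f 6 * f 9 * f 18) - (f 6 * f 9^3 - 2*X*(f 3 * f 18^3))
      = (phiNeg - ((∑ n ∈ Finset.Icc (-(M:ℤ)) M, SAterm n)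
          - 2*X*∑ n ∈ Finset.Icc (-(M:ℤ)) M, SBterm n)) * (f 6 * f 9 * f 18)
        + (((∑ n ∈ Finset.Icc (-(M:ℤ)) M, SAterm n)
          - 2*X*∑ n ∈ Finset.Icc (-(M:ℤ)) M, SBterm n) * (f 6 * f 9 * f 18)
          - (f 6 * f 9^3 - 2*X*(f 3 * f 18^3))) := by ring
  rw [e2]
  exact dvd_add (Dvd.dvd.mul_right hphi _) hmain

lemma constantCoeff_f {a : ℕ} (ha : 1 ≤ a) : constantCoeff (f a) = 1 := by
  have h := f_approx ha 1
  have h0 := (X_pow_dvd_iff.mp h) 0 (by norm_num)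
  rw [map_sub] at h0
  have h1 : (coeff 0) (PP (fun k => a*(k+1)) 1) = 1 := by
    rw [PP, Finset.prod_range_one, map_sub]
    rw [coeff_zero_eq_constantCoeff_apply, coeff_zero_eq_constantCoeff_apply, map_one, map_pow,
      constantCoeff_X, zero_pow (show a*(0+1) ≠ 0 by omega)]
    ring
  rw [h1] at h0
  rw [← coeff_zero_eq_constantCoeff_apply]
  omega

lemma unit_f {a : ℕ} (ha : 1 ≤ a) : IsUnit (f a) := by
  rw [PowerSeries.isUnit_iff_constantCoeff, constantCoeff_f ha]
  exact isUnit_one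

theorem phiNeg_three_dissection :
    phiNeg = f 9 ^ 2 * Ring.inverse (f 18)
      - 2 * X * (f 3 * f 18 ^ 2 * Ring.inverse (f 6 * f 9)) := by
  have hu18 : IsUnit (f 18) := unit_f (by norm_num)
  have hu69 : IsUnit (f 6 * f 9) := (unit_f (by norm_num)).mul (unit_f (by norm_num))
  have hne : (f 6 * f 9 * f 18) ≠ 0 := (hu69.mul hu18).ne_zero
  apply mul_right_cancel₀ hne
  have i18 : Ring.inverse (f 18) * f 18 = 1 := Ring.inverse_mul_cancel _ hu18
  have i69 : Ring.inverse (f 6 * f 9) * (f 6 * f 9) = 1 := Ring.inverse_mul_cancel _ hu69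
  rw [Gmain]
  linear_combination (-(f 9^2 * f 6 * f 9)) * i18 + (2*X*f 3*f 18^2*f 18) * i69

end Final
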